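/- Let {λ_k}_{k≥0} be a lacunary sequence of positive numbers, {ε_k}_{k≥0} a sequence of positive numbers, n ≥ 2 an integer, κ > 0, β, τ ∈ (0,1), and A ≥ 1 an integer. For i, k ≥ 0 set δ_k(i) = (∑_{i+kA ≤ ℓ < i+(k+1)A} ε_ℓ)^{(1−β)(1−τ)/(n−1)}. Then there is a constant C, independent of i and of {ε_k}, such that for every i: (∑_{j > i} λ_j^{−κ} ε_j^{(1−τ)(1−β)/(n−1)})^{n−1} ≤ C ∑_{k_1, …, k_{n−1} ≥ 0} ∏_{j=1}^{n−1} δ_{k_j}(i) λ_{i+k_j A}^{−κ}. -/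

import Mathlib

open MeasureTheory Set Filter

/-- The weighted measure `dν_{α-1} = (1-x)^{α-1} dx` on `[0,1]`. -/
noncomputable def nuMeas (α : ℝ) : MeasureTheory.Measure ℝ :=
  (MeasureTheory.volume.restrict (Set.Icc (0:ℝ) 1)).withDensity
    fun x => ENNReal.ofReal ((1 - x) ^ (α - 1))

/-- The space of Müntz polynomials `t ↦ ∑_{k=0}^K a_k t^{λ_k}`. -/
def MuntzPoly (Λ : ℕ → ℝ) : Set (ℝ → ℂ) :=
  { f | ∃ K : ℕ, ∃ a : ℕ → ℂ,
      f = fun t : ℝ => ∑ k ∈ Finset.range (K + 1), a k * ((t ^ (Λ k) : ℝ) : ℂ) }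

/-- The block space `F_k = Span{t^λ : λ ∈ E_k}`, where the `k`-th block consists of the
indices `j` with `n k ≤ j < n (k+1)`. -/
def BlockSpace (Λ : ℕ → ℝ) (n : ℕ → ℕ) (k : ℕ) : Set (ℝ → ℂ) :=
  { f | ∃ a : ℕ → ℂ,
      f = fun t : ℝ => ∑ j ∈ Finset.Ico (n k) (n (k + 1)), a j * ((t ^ (Λ j) : ℝ) : ℂ) }

/-- `Λ` is a quasi-lacunary sequence: an increasing positive sequence with summable
inverses, partitioned into consecutive blocks of length at most `N` (block `k` being the
indices in `[n k, n (k+1))`), whose block endpoints form an (eventually) lacunary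
sequence. -/
structure IsQuasiLacunary (Λ : ℕ → ℝ) (n : ℕ → ℕ) (N : ℕ) : Prop where
  pos : ∀ k, 0 < Λ k
  mono : StrictMono Λ
  sum_inv : Summable fun k => 1 / Λ k
  one_le_N : 1 ≤ N
  n_zero : n 0 = 0
  n_mono : StrictMono n
  block_le : ∀ k, n (k + 1) - n k ≤ N
  ratio : ∃ q : ℝ, 1 < q ∧ ∀ᶠ k in Filter.atTop, q * Λ (n k) < Λ (n (k + 1))

/-- The block endpoints of `Λ` form a subgeometric sequence. -/
def IsSubgeometric (Λ : ℕ → ℝ) (n : ℕ → ℕ) : Prop :=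
  ∃ q' : ℝ, 1 < q' ∧ ∀ᶠ k in Filter.atTop, Λ (n (k + 1)) ≤ q' * Λ (n k)

/-- `T` is a sublinear operator acting on `M_Λ`, producing `μ`-measurable functions. -/
def SublinearOn (Λ : ℕ → ℝ) (μ : MeasureTheory.Measure ℝ)
    (T : (ℝ → ℂ) → ℝ → ℂ) : Prop :=
  (∀ f ∈ MuntzPoly Λ, AEMeasurable (T f) μ) ∧
  (∀ c : ℂ, ∀ f ∈ MuntzPoly Λ, ∀ t : ℝ, ‖T (fun x => c * f x) t‖ = ‖c‖ * ‖T f t‖) ∧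
  (∀ f ∈ MuntzPoly Λ, ∀ g ∈ MuntzPoly Λ, ∀ t : ℝ,
      ‖T (f + g) t‖ ≤ ‖T f t‖ + ‖T g t‖) ∧
  (∀ f ∈ MuntzPoly Λ, ∀ g ∈ MuntzPoly Λ, ∀ t : ℝ,
      ‖T f t - T g t‖ ≤ ‖T (f - g) t‖)

/-- `T` is of restricted weak type `r` with constants `Cr k`:
`μ(|Tf| > λ) ≤ Cr(k)^r λ^{-r} ‖f‖^r_{L^{r/β}(dν_{α-1})}` for every `f ∈ F_k`, `λ > 0`. -/
def RestrictedWeakType (Λ : ℕ → ℝ) (n : ℕ → ℕ) (α β : ℝ)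
    (μ : MeasureTheory.Measure ℝ) (T : (ℝ → ℂ) → ℝ → ℂ) (r : ℝ) (Cr : ℕ → ℝ) : Prop :=
  ∀ k : ℕ, ∀ f ∈ BlockSpace Λ n k, ∀ lam : ℝ, 0 < lam →
    μ {t : ℝ | lam < ‖T f t‖} ≤
      ENNReal.ofReal (Cr k ^ r * lam⁻¹ ^ r) *
        MeasureTheory.eLpNorm f (ENNReal.ofReal (r / β)) (nuMeas α) ^ r

/-- `T` is of restricted strong type `r` with constants `Cr k`:
`‖Tf‖_{L^r(dμ)} ≤ Cr(k) ‖f‖_{L^{r/β}(dν_{α-1})}` for every `f ∈ F_k`. -/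
def RestrictedStrongType (Λ : ℕ → ℝ) (n : ℕ → ℕ) (α β : ℝ)
    (μ : MeasureTheory.Measure ℝ) (T : (ℝ → ℂ) → ℝ → ℂ) (r : ℝ) (Cr : ℕ → ℝ) : Prop :=
  ∀ k : ℕ, ∀ f ∈ BlockSpace Λ n k,
    MeasureTheory.eLpNorm (T f) (ENNReal.ofReal r) μ ≤
      ENNReal.ofReal (Cr k) *
        MeasureTheory.eLpNorm f (ENNReal.ofReal (r / β)) (nuMeas α)

/-- The condition `B_{p,Λ}(α,β)`: `sup_k λ_{n_k}^{αβ} ∫ t^{p λ_{n_k}} dμ < ∞`. -/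
def CondB (Λ : ℕ → ℝ) (n : ℕ → ℕ) (α β p : ℝ) (μ : MeasureTheory.Measure ℝ) : Prop :=
  ∃ B : ℝ, ∀ k : ℕ,
    ENNReal.ofReal (Λ (n k) ^ (α * β)) *
        ∫⁻ t in Set.Icc (0:ℝ) 1, ENNReal.ofReal (t ^ (p * Λ (n k))) ∂μ ≤
      ENNReal.ofReal B

/-- The condition `A_{p,Λ}(α,β)`:
`∑_k λ_{n_k}^{αβ/(1-β)} (∫ t^{p λ_{n_k}} dμ)^{1/(1-β)} < ∞`. -/
def CondA (Λ : ℕ → ℝ) (n : ℕ → ℕ) (α β p : ℝ) (μ : MeasureTheory.Measure ℝ) : Prop :=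
  (∑' k : ℕ, ENNReal.ofReal (Λ (n k) ^ (α * β / (1 - β))) *
      (∫⁻ t in Set.Icc (0:ℝ) 1, ENNReal.ofReal (t ^ (p * Λ (n k))) ∂μ) ^ (1 / (1 - β))) < ⊤

/-- The image under `T` of the unit ball of `M_Λ` (with the `L^{r/β}(dν_{α-1})` norm)
is totally bounded in `L^r(dμ)`. -/
def CompactEmbed (Λ : ℕ → ℝ) (α β r : ℝ) (μ : MeasureTheory.Measure ℝ)
    (T : (ℝ → ℂ) → ℝ → ℂ) : Prop :=
  ∀ δ : ℝ, 0 < δ → ∃ G : Set (ℝ → ℂ), G.Finite ∧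
    ∀ f ∈ MuntzPoly Λ,
      MeasureTheory.eLpNorm f (ENNReal.ofReal (r / β)) (nuMeas α) ≤ 1 →
      ∃ g ∈ G, MeasureTheory.eLpNorm (fun t => T f t - g t) (ENNReal.ofReal r) μ <
        ENNReal.ofReal δ

open scoped ENNReal

private lemma tsum_pow_eq_tsum_pi (g : ℕ → ℝ≥0∞) (m : ℕ) :
    (∑' n, g n) ^ m = ∑' k : Fin m → ℕ, ∏ j, g (k j) := by
  induction m with
  | zero =>
    rw [pow_zero]
    simp only [Fin.prod_univ_zero]
    exact (tsum_eq_single (f := fun _ : Fin 0 → ℕ => (1:ℝ≥0∞)) (fun x => x.elim0)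
      (fun b hb => absurd (funext fun x => x.elim0) hb)).symm
  | succ m ih =>
    calc (∑' n, g n) ^ (m + 1) = (∑' n, g n) * (∑' n, g n) ^ m := by
          rw [pow_succ, mul_comm]
      _ = ∑' a : ℕ, ∑' k : Fin m → ℕ, g a * ∏ j, g (k j) := by
          rw [ih, ← ENNReal.tsum_mul_right]
          exact tsum_congr fun a => ENNReal.tsum_mul_left.symm
      _ = ∑' p : ℕ × (Fin m → ℕ), g p.1 * ∏ j, g (p.2 j) := (ENNReal.tsum_prod' (f := fun p : ℕ × (Fin m → ℕ) => g p.1 * ∏ j, g (p.2 j))).symm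
      _ = ∑' k : Fin (m + 1) → ℕ, ∏ j, g (k j) := by
          rw [← (Fin.consEquiv (fun _ : Fin (m + 1) => ℕ)).tsum_eq
            (fun k => ∏ j, g (k j))]
          exact tsum_congr fun p => by
            simp [Fin.prod_univ_succ, Fin.consEquiv]


/-- Lemma on series of lacunary coefficients, the `Δ_i^+` bound. -/
theorem lacunary_series_upper_bound
    (lam : ℕ → ℝ) (q : ℝ) (hq : 1 < q) (hpos : ∀ k, 0 < lam k)
    (hlac : ∀ k, q * lam k ≤ lam (k + 1))
    (nn : ℕ) (hn : 2 ≤ nn) (κ : ℝ) (hκ : 0 < κ) (β τ : ℝ)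
    (hβ0 : 0 < β) (hβ1 : β < 1) (hτ0 : 0 < τ) (hτ1 : τ < 1)
    (A : ℕ) (hA : 1 ≤ A) :
    ∃ C : ℝ, 0 < C ∧ ∀ ε : ℕ → ℝ, (∀ k, 0 < ε k) → ∀ i : ℕ,
      (∑' j : ℕ, if i < j then
          ENNReal.ofReal (lam j ^ (-κ) * ε j ^ ((1 - τ) * (1 - β) / ((nn : ℝ) - 1)))
        else 0) ^ (nn - 1) ≤
      ENNReal.ofReal C *
        ∑' k : Fin (nn - 1) → ℕ, ∏ j : Fin (nn - 1),
          ENNReal.ofReal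
            ((∑ ℓ ∈ Finset.Ico (i + k j * A) (i + (k j + 1) * A), ε ℓ) ^
                ((1 - β) * (1 - τ) / ((nn : ℝ) - 1)) *
              lam (i + k j * A) ^ (-κ)) := by
  have hnn1 : (0:ℝ) < (nn:ℝ) - 1 := by
    have : (2:ℝ) ≤ (nn:ℝ) := by exact_mod_cast hn
    linarith
  have hA0 : (0:ℝ) < (A:ℝ) := by exact_mod_cast hA
  refine ⟨(A:ℝ) ^ (nn - 1), pow_pos hA0 _, ?_⟩
  intro ε hε i
  haveI : NeZero A := ⟨by omega⟩
  set θ := (1 - τ) * (1 - β) / ((nn : ℝ) - 1) with hθdef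
  have hθ0 : 0 < θ := by
    apply div_pos _ hnn1
    nlinarith
  have hθeq : (1 - β) * (1 - τ) / ((nn : ℝ) - 1) = θ := by rw [hθdef]; ring
  have hmono : Monotone lam := monotone_nat_of_le_succ fun k =>
    le_trans (le_mul_of_one_le_left (hpos k).le hq.le) (hlac k)
  set F : ℕ → ℝ≥0∞ := fun j =>
    if i < j then ENNReal.ofReal (lam j ^ (-κ) * ε j ^ θ) else 0 with hF
  set g : ℕ → ℝ≥0∞ := fun k => ENNReal.ofReal
    ((∑ ℓ ∈ Finset.Ico (i + k * A) (i + (k + 1) * A), ε ℓ) ^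
        ((1 - β) * (1 - τ) / ((nn : ℝ) - 1)) * lam (i + k * A) ^ (-κ)) with hg
  -- per-term bound
  have hterm : ∀ k r : ℕ, r < A → F (i + (k * A + r)) ≤ g k := by
    intro k r hr
    simp only [hF]
    by_cases h : i < i + (k * A + r)
    · rw [if_pos h, hg]
      apply ENNReal.ofReal_le_ofReal
      set j := i + (k * A + r) with hj
      have hblock : j ∈ Finset.Ico (i + k * A) (i + (k + 1) * A) := by
        have hkA : (k + 1) * A = k * A + A := by ring
        simp only [Finset.mem_Ico]
        omega
      have h5 : lam j ^ (-κ) ≤ lam (i + k * A) ^ (-κ) :=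
        Real.rpow_le_rpow_of_nonpos (hpos _) (hmono (by omega)) (by linarith)
      have hS : ε j ≤ ∑ ℓ ∈ Finset.Ico (i + k * A) (i + (k + 1) * A), ε ℓ :=
        Finset.single_le_sum (fun ℓ _ => (hε ℓ).le) hblock
      have h6 : ε j ^ θ ≤
          (∑ ℓ ∈ Finset.Ico (i + k * A) (i + (k + 1) * A), ε ℓ) ^
            ((1 - β) * (1 - τ) / ((nn : ℝ) - 1)) := by
        rw [hθeq]
        exact Real.rpow_le_rpow (hε j).le hS hθ0.le
      calc lam j ^ (-κ) * ε j ^ θ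
          ≤ lam (i + k * A) ^ (-κ) *
            (∑ ℓ ∈ Finset.Ico (i + k * A) (i + (k + 1) * A), ε ℓ) ^
              ((1 - β) * (1 - τ) / ((nn : ℝ) - 1)) :=
            mul_le_mul h5 h6 (Real.rpow_nonneg (hε j).le _)
              (Real.rpow_nonneg (hpos _).le _)
        _ = _ := mul_comm _ _
    · rw [if_neg h]; exact zero_le
  -- block decomposition
  have key : (∑' j, F j) ≤ (A : ℝ≥0∞) * ∑' k, g k := by
    have h1 : ∑' j, F j = ∑' r, F (i + r) := by
      refine (Function.Injective.tsum_eq (fun a b hab => by omega) ?_).symm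
      intro j hj
      have hij : i < j := by
        by_contra hc
        exact hj (by rw [hF]; simp [if_neg hc])
      exact ⟨j - i, by omega⟩
    have h2 : ∑' r, F (i + r) =
        ∑' p : ℕ × Fin A, F (i + (p.1 * A + (p.2 : ℕ))) :=
      (((Nat.divModEquiv A).symm).tsum_eq fun r => F (i + r)).symm
    have h3 : ∑' p : ℕ × Fin A, F (i + (p.1 * A + (p.2 : ℕ))) =
        ∑' k : ℕ, ∑' r : Fin A, F (i + (k * A + (r : ℕ))) :=
      ENNReal.tsum_prod'
    rw [h1, h2, h3, ← ENNReal.tsum_mul_left]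
    refine ENNReal.tsum_le_tsum fun k => ?_
    rw [tsum_fintype]
    calc ∑ r : Fin A, F (i + (k * A + (r : ℕ)))
        ≤ ∑ _r : Fin A, g k := Finset.sum_le_sum fun r _ => hterm k r r.2
      _ = (A : ℝ≥0∞) * g k := by
          rw [Finset.sum_const, Finset.card_univ, Fintype.card_fin, nsmul_eq_mul]
  calc (∑' j, F j) ^ (nn - 1) ≤ ((A : ℝ≥0∞) * ∑' k, g k) ^ (nn - 1) :=
        pow_le_pow_left₀ zero_le key _
    _ = (A : ℝ≥0∞) ^ (nn - 1) * (∑' k, g k) ^ (nn - 1) := mul_pow _ _ _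
    _ = ENNReal.ofReal ((A:ℝ) ^ (nn - 1)) *
        ∑' k : Fin (nn - 1) → ℕ, ∏ j, g (k j) := by
        rw [tsum_pow_eq_tsum_pi, ENNReal.ofReal_pow (Nat.cast_nonneg A),
          ENNReal.ofReal_natCast]
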